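/- Let V be an n×n Hermitian matrix with ordered eigenvalues μ₁(V) ≥ ... ≥ μₙ(V) and let S be an arbitrary n×n matrix. Then for every i, the i-th ordered eigenvalue of S†VS satisfies μᵢ(S†VS) ≤ ρ(S†S)·μᵢ(V) when μᵢ(V) ≥ 0, where ρ denotes the spectral radius. -/

import Mathlib

/-!
A Courant–Fischer dimension count. The eigenvectors of `SᴴVS` for its `i + 1` largest eigenvalues
span a subspace `W` on which `⟪x, SᴴVS x⟫ ≥ μᵢ(SᴴVS) ‖x‖²`, and those of `V` for its `n - i`
smallest eigenvalues span a subspace `U` on which `⟪y, V y⟫ ≤ μᵢ(V) ‖y‖²`. Since `S⁻¹(U)` has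
dimension at least `n - i`, it meets `W` in some `x ≠ 0`, and for it
`μᵢ(SᴴVS) ‖x‖² ≤ ⟪Sx, V Sx⟫ ≤ μᵢ(V) ‖Sx‖² ≤ μᵢ(V) ‖S‖² ‖x‖²`, the last step because
`μᵢ(V) ≥ 0`. Finally `‖S‖² = ρ(SᴴS)` in the `C⋆`-algebra of matrices.
-/

open Matrix

/-- The eigenvalues of a Hermitian matrix, listed in decreasing order:
`orderedEigenvalues hV 0 ≥ orderedEigenvalues hV 1 ≥ ...`. -/
noncomputable def orderedEigenvalues {n : ℕ} {V : Matrix (Fin n) (Fin n) ℂ}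
    (hV : V.IsHermitian) : Fin n → ℝ :=
  fun i => (hV.eigenvalues ∘ Tuple.sort hV.eigenvalues) i.rev

open Finset Submodule Module
open scoped InnerProductSpace

namespace Submodule

variable {K V : Type*} [DivisionRing K] [AddCommGroup V] [Module K V] [FiniteDimensional K V]

theorem finrank_le_finrank_comap (f : V →ₗ[K] V) (U : Submodule K V) :
    finrank K U ≤ finrank K (U.comap f) := by
  have hrank := LinearMap.finrank_range_add_finrank_ker (U.mkQ ∘ₗ f)
  rw [LinearMap.ker_comp, ker_mkQ] at hrank
  have hrange := (LinearMap.range (U.mkQ ∘ₗ f)).finrank_le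
  have hquot := U.finrank_quotient_add_finrank
  omega

theorem inf_ne_bot_of_finrank_lt_add {W U : Submodule K V}
    (h : finrank K V < finrank K W + finrank K U) : W ⊓ U ≠ ⊥ := by
  intro hbot
  have hsum := finrank_sup_add_finrank_inf_eq W U
  rw [hbot, finrank_bot] at hsum
  have hsup := (W ⊔ U).finrank_le
  omega

end Submodule

namespace OrthonormalBasis

variable {𝕜 E ι : Type*} [RCLike 𝕜] [NormedAddCommGroup E] [InnerProductSpace 𝕜 E] [Fintype ι]

theorem inner_eq_zero_of_mem_span_image (b : OrthonormalBasis ι 𝕜 E) {T : Set ι} {x : E}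
    (hx : x ∈ span 𝕜 (b '' T)) {j : ι} (hj : j ∉ T) : ⟪b j, x⟫_𝕜 = 0 := by
  rw [← b.coe_toBasis, b.toBasis.mem_span_image] at hx
  rw [← b.repr_apply_apply, ← b.coe_toBasis_repr_apply]
  exact Finsupp.notMem_support_iff.mp fun hmem => hj (hx hmem)

theorem finrank_span_image_finset (b : OrthonormalBasis ι 𝕜 E) (T : Finset ι) :
    finrank 𝕜 (span 𝕜 (b '' T)) = #T := by
  have hli :=
    b.orthonormal.linearIndependent.comp (Subtype.val : ↥(T : Set ι) → ι) Subtype.val_injective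
  rw [← Subtype.range_coe (s := (T : Set ι)), ← Set.range_comp, finrank_span_eq_card hli]
  simp

end OrthonormalBasis

namespace Matrix

variable {𝕜 ι : Type*} [RCLike 𝕜] [Fintype ι] [DecidableEq ι]

theorem inner_toEuclideanLin_conjTranspose_mul_mul {κ : Type*} [Fintype κ] [DecidableEq κ]
    (V : Matrix κ κ 𝕜) (S : Matrix κ ι 𝕜) (x : EuclideanSpace 𝕜 ι) :
    ⟪x, toEuclideanLin (Sᴴ * V * S) x⟫_𝕜 =
      ⟪toEuclideanLin S x, toEuclideanLin V (toEuclideanLin S x)⟫_𝕜 := by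
  rw [toLpLin_mul_same, toLpLin_mul_same, LinearMap.comp_apply, LinearMap.comp_apply,
    toEuclideanLin_conjTranspose_eq_adjoint, LinearMap.adjoint_inner_right]

namespace IsHermitian

variable {A : Matrix ι ι 𝕜} (hA : A.IsHermitian)

theorem toEuclideanLin_eigenvectorBasis (j : ι) :
    toEuclideanLin A (hA.eigenvectorBasis j) =
      (hA.eigenvalues j : 𝕜) • hA.eigenvectorBasis j := by
  rw [toLpLin_apply, hA.mulVec_eigenvectorBasis, WithLp.toLp_smul, WithLp.toLp_ofLp,
    RCLike.real_smul_eq_coe_smul (K := 𝕜)]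

theorem re_inner_toEuclideanLin_eq_sum (x : EuclideanSpace 𝕜 ι) :
    RCLike.re ⟪x, toEuclideanLin A x⟫_𝕜
      = ∑ j, hA.eigenvalues j * ‖⟪hA.eigenvectorBasis j, x⟫_𝕜‖ ^ 2 := by
  have hsymm := isSymmetric_toEuclideanLin_iff.mpr hA
  rw [← hA.eigenvectorBasis.sum_inner_mul_inner, map_sum]
  refine Finset.sum_congr rfl fun j _ => ?_
  rw [← hsymm, toEuclideanLin_eigenvectorBasis, inner_smul_left, RCLike.conj_ofReal,
    ← inner_conj_symm x, mul_comm, mul_assoc, RCLike.mul_conj, ← RCLike.ofReal_pow,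
    ← RCLike.ofReal_mul, RCLike.ofReal_re]

theorem mul_norm_sq_le_re_inner_of_mem_span {T : Set ι} {c : ℝ}
    (hc : ∀ j ∈ T, c ≤ hA.eigenvalues j) {x : EuclideanSpace 𝕜 ι}
    (hx : x ∈ span 𝕜 (hA.eigenvectorBasis '' T)) :
    c * ‖x‖ ^ 2 ≤ RCLike.re ⟪x, toEuclideanLin A x⟫_𝕜 := by
  rw [hA.re_inner_toEuclideanLin_eq_sum, ← hA.eigenvectorBasis.sum_sq_norm_inner_right, mul_sum]
  refine sum_le_sum fun j _ => ?_
  by_cases hj : j ∈ T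
  · exact mul_le_mul_of_nonneg_right (hc j hj) (by positivity)
  · simp [hA.eigenvectorBasis.inner_eq_zero_of_mem_span_image hx hj]

theorem re_inner_le_mul_norm_sq_of_mem_span {T : Set ι} {c : ℝ}
    (hc : ∀ j ∈ T, hA.eigenvalues j ≤ c) {x : EuclideanSpace 𝕜 ι}
    (hx : x ∈ span 𝕜 (hA.eigenvectorBasis '' T)) :
    RCLike.re ⟪x, toEuclideanLin A x⟫_𝕜 ≤ c * ‖x‖ ^ 2 := by
  rw [hA.re_inner_toEuclideanLin_eq_sum, ← hA.eigenvectorBasis.sum_sq_norm_inner_right, mul_sum]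
  refine sum_le_sum fun j _ => ?_
  by_cases hj : j ∈ T
  · exact mul_le_mul_of_nonneg_right (hc j hj) (by positivity)
  · simp [hA.eigenvectorBasis.inner_eq_zero_of_mem_span_image hx hj]

end IsHermitian

section L2Operator

open scoped Matrix.Norms.L2Operator

theorem norm_toEuclideanLin_sq_le (S : Matrix ι ι ℂ) (x : EuclideanSpace ℂ ι) :
    ‖toEuclideanLin S x‖ ^ 2 ≤ (spectralRadius ℂ (Sᴴ * S)).toReal * ‖x‖ ^ 2 := by
  rw [← star_eq_conjTranspose, CStarAlgebra.toReal_spectralRadius_star_mul_self_eq_norm_sq,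
    ← mul_pow]
  gcongr
  exact S.l2_opNorm_mulVec x

end L2Operator

end Matrix

section Ordered

variable {n : ℕ} {A : Matrix (Fin n) (Fin n) ℂ} (hA : A.IsHermitian)

theorem orderedEigenvalues_antitone : Antitone (orderedEigenvalues hA) :=
  fun _ _ hij => Tuple.monotone_sort hA.eigenvalues (Fin.rev_le_rev.mpr hij)

noncomputable def orderedIndex : Fin n ≃ Fin n := Fin.revPerm.trans (Tuple.sort hA.eigenvalues)

theorem eigenvalues_orderedIndex (k : Fin n) :
    hA.eigenvalues (orderedIndex hA k) = orderedEigenvalues hA k := rfl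

theorem exists_finrank_eq_forall_orderedEigenvalues_mul_norm_sq_le (i : Fin n) :
    ∃ W : Submodule ℂ (EuclideanSpace ℂ (Fin n)), finrank ℂ W = i + 1 ∧
      ∀ x ∈ W, orderedEigenvalues hA i * ‖x‖ ^ 2 ≤ RCLike.re ⟪x, toEuclideanLin A x⟫_ℂ := by
  set T := (Iic i).map (orderedIndex hA).toEmbedding
  refine ⟨span ℂ (hA.eigenvectorBasis '' T), ?_, fun x hx => ?_⟩
  · rw [hA.eigenvectorBasis.finrank_span_image_finset, card_map, Fin.card_Iic]
  · refine hA.mul_norm_sq_le_re_inner_of_mem_span (fun j hj => ?_) hx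
    obtain ⟨k, hk, rfl⟩ := mem_map.mp hj
    rw [Equiv.coe_toEmbedding, eigenvalues_orderedIndex]
    exact orderedEigenvalues_antitone hA (mem_Iic.mp hk)

theorem exists_finrank_eq_forall_re_inner_le_orderedEigenvalues_mul_norm_sq (i : Fin n) :
    ∃ U : Submodule ℂ (EuclideanSpace ℂ (Fin n)), finrank ℂ U = n - i ∧
      ∀ x ∈ U, RCLike.re ⟪x, toEuclideanLin A x⟫_ℂ ≤ orderedEigenvalues hA i * ‖x‖ ^ 2 := by
  set T := (Ici i).map (orderedIndex hA).toEmbedding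
  refine ⟨span ℂ (hA.eigenvectorBasis '' T), ?_, fun x hx => ?_⟩
  · rw [hA.eigenvectorBasis.finrank_span_image_finset, card_map, Fin.card_Ici]
  · refine hA.re_inner_le_mul_norm_sq_of_mem_span (fun j hj => ?_) hx
    obtain ⟨k, hk, rfl⟩ := mem_map.mp hj
    rw [Equiv.coe_toEmbedding, eigenvalues_orderedIndex]
    exact orderedEigenvalues_antitone hA (mem_Ici.mp hk)

end Ordered

/-- **Multiplicative Lidskii–Mirsky–Wielandt bound.** For a Hermitian `V` and arbitrary `S`,
the `i`-th ordered eigenvalue satisfies `μᵢ(S†VS) ≤ ρ(S†S)·μᵢ(V)` whenever `μᵢ(V) ≥ 0`,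
where `ρ` is the spectral radius. -/
theorem ordered_eigenvalue_congruence_bound {n : ℕ} (V S : Matrix (Fin n) (Fin n) ℂ)
    (hV : V.IsHermitian) (hSVS : (Sᴴ * V * S).IsHermitian) (i : Fin n)
    (hpos : 0 ≤ orderedEigenvalues hV i) :
    orderedEigenvalues hSVS i ≤ (spectralRadius ℂ (Sᴴ * S)).toReal * orderedEigenvalues hV i := by
  obtain ⟨W, hW, hSVS_ge⟩ := exists_finrank_eq_forall_orderedEigenvalues_mul_norm_sq_le hSVS i
  obtain ⟨U, hU, hV_le⟩ :=
    exists_finrank_eq_forall_re_inner_le_orderedEigenvalues_mul_norm_sq hV i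
  set f := toEuclideanLin S
  have hdim : finrank ℂ (EuclideanSpace ℂ (Fin n)) < finrank ℂ W + finrank ℂ (U.comap f) := by
    have hcomap := hU ▸ U.finrank_le_finrank_comap f
    rw [finrank_euclideanSpace_fin, hW]
    omega
  obtain ⟨x, ⟨hxW, hxU⟩, hx0⟩ :=
    exists_mem_ne_zero_of_ne_bot (inf_ne_bot_of_finrank_lt_add hdim)
  have key : orderedEigenvalues hSVS i * ‖x‖ ^ 2 ≤
      (spectralRadius ℂ (Sᴴ * S)).toReal * orderedEigenvalues hV i * ‖x‖ ^ 2 :=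
    calc orderedEigenvalues hSVS i * ‖x‖ ^ 2
        ≤ RCLike.re ⟪x, toEuclideanLin (Sᴴ * V * S) x⟫_ℂ := hSVS_ge x hxW
      _ = RCLike.re ⟪f x, toEuclideanLin V (f x)⟫_ℂ := by
        rw [inner_toEuclideanLin_conjTranspose_mul_mul]
      _ ≤ orderedEigenvalues hV i * ‖f x‖ ^ 2 := hV_le (f x) hxU
      _ ≤ orderedEigenvalues hV i * ((spectralRadius ℂ (Sᴴ * S)).toReal * ‖x‖ ^ 2) := by
        gcongr
        exact S.norm_toEuclideanLin_sq_le x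
      _ = _ := by ring
  exact le_of_mul_le_mul_right key (by positivity)
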